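/- (Theorem 2, part (i), discrete form.) Fix x ∈ 𝒳. Let P and Q be two probability measures on the same finite space, each satisfying Assumption 2, each with P(X=x, T=t, R^X=1, R^T=1) > 0 for all t ∈ 𝒯 and P(R^Y=1 | X=x, Y=y, R^X=1, R^T=1) > 0 for all y ∈ 𝒴 (and likewise for Q). Suppose P and Q induce the same observed-data conditionals at x: for all t ∈ 𝒯 and y ∈ 𝒴, P(Y=y, R^Y=1 | T=t, X=x, R^X=1, R^T=1) = Q(Y=y, R^Y=1 | T=t, X=x, R^X=1, R^T=1) and P(R^Y=0 | T=t, X=x, R^X=1, R^T=1) = Q(R^Y=0 | T=t, X=x, R^X=1, R^T=1). If the |𝒯| × |𝒴| matrix Θ_x with entries Θ_x(t,y) = P(Y=y, R^Y=1 | T=t, X=x, R^X=1, R^T=1) has rank |𝒴|, then for all t ∈ 𝒯 and y ∈ 𝒴, P(Y=y | T=t, X=x) = Q(Y=y | T=t, X=x). In particular the conditional outcome distribution at x, and hence the conditional average treatment effect at x, is identified from the observed data. -/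

import Mathlib

open scoped Classical
noncomputable section

namespace CATEMNAR

variable {Ω : Type*} [Fintype Ω]

/-- Probability of the event `E` under the pmf `p` on the finite space `Ω`. -/
def Pr (p : Ω → ℝ) (E : Ω → Prop) : ℝ := ∑ ω, if E ω then p ω else 0

/-- Conditional probability `P(E | C)` (junk value `0` when `P(C) = 0`). -/
def CPr (p : Ω → ℝ) (E C : Ω → Prop) : ℝ := Pr p (fun ω => E ω ∧ C ω) / Pr p C

/-- Conditional independence `A ⫫ B | C` under `p`: for all values `a, b, c` with
`P(C = c) > 0`, `P(A = a, B = b | C = c) = P(A = a | C = c) * P(B = b | C = c)`. -/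
def CondIndep {α β γ : Type*} (p : Ω → ℝ) (A : Ω → α) (B : Ω → β) (C : Ω → γ) : Prop :=
  ∀ (a : α) (b : β) (c : γ), 0 < Pr p (fun ω => C ω = c) →
    CPr p (fun ω => A ω = a ∧ B ω = b) (fun ω => C ω = c) =
      CPr p (fun ω => A ω = a) (fun ω => C ω = c) *
        CPr p (fun ω => B ω = b) (fun ω => C ω = c)

lemma Pr_congr (p : Ω → ℝ) {E F : Ω → Prop} (h : ∀ ω, E ω ↔ F ω) : Pr p E = Pr p F := by
  unfold Pr
  exact Finset.sum_congr rfl fun ω _ => by simp [h ω]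

lemma Pr_nonneg {p : Ω → ℝ} (hp : ∀ ω, 0 ≤ p ω) (E : Ω → Prop) : 0 ≤ Pr p E :=
  Finset.sum_nonneg fun ω _ => by by_cases h : E ω <;> simp [h, hp ω]

lemma Pr_mono {p : Ω → ℝ} (hp : ∀ ω, 0 ≤ p ω) {E F : Ω → Prop} (h : ∀ ω, E ω → F ω) :
    Pr p E ≤ Pr p F := by
  refine Finset.sum_le_sum fun ω _ => ?_
  by_cases hE : E ω
  · simp [hE, h ω hE]
  · by_cases hF : F ω <;> simp [hE, hF, hp ω]

lemma CPr_congr (p : Ω → ℝ) {E E' C C' : Ω → Prop} (hE : ∀ ω, E ω ↔ E' ω)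
    (hC : ∀ ω, C ω ↔ C' ω) : CPr p E C = CPr p E' C' := by
  unfold CPr
  rw [Pr_congr p (fun ω => and_congr (hE ω) (hC ω)), Pr_congr p hC]

lemma Pr_sum_fiber {𝒴 : Type*} [Fintype 𝒴] (p : Ω → ℝ) (Y : Ω → 𝒴) (C : Ω → Prop) :
    ∑ y, Pr p (fun ω => Y ω = y ∧ C ω) = Pr p C := by
  unfold Pr
  rw [Finset.sum_comm]
  refine Finset.sum_congr rfl fun ω _ => ?_
  by_cases hC : C ω <;> simp [hC]

lemma condIndep_dropA {α β γ : Type*} {p : Ω → ℝ} (hp : ∀ ω, 0 ≤ p ω)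
    {A : Ω → α} {B : Ω → β} {C : Ω → γ}
    (h : CondIndep p A B C) (a : α) (b : β) (c : γ)
    (hpos : 0 < Pr p (fun ω => A ω = a ∧ C ω = c)) :
    CPr p (fun ω => B ω = b) (fun ω => A ω = a ∧ C ω = c) =
      CPr p (fun ω => B ω = b) (fun ω => C ω = c) := by
  have hC : 0 < Pr p (fun ω => C ω = c) :=
    lt_of_lt_of_le hpos (Pr_mono hp fun ω h => h.2)
  have h' := h a b c hC
  unfold CPr at h' ⊢
  have hAB : Pr p (fun ω => B ω = b ∧ A ω = a ∧ C ω = c)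
      = Pr p (fun ω => (A ω = a ∧ B ω = b) ∧ C ω = c) := Pr_congr p (by tauto)
  rw [hAB]
  have hCne : Pr p (fun ω => C ω = c) ≠ 0 := hC.ne'
  have hAne : Pr p (fun ω => A ω = a ∧ C ω = c) ≠ 0 := hpos.ne'
  rw [div_eq_div_iff hAne hCne]
  have key : (Pr p fun ω => (A ω = a ∧ B ω = b) ∧ C ω = c) * (Pr p fun ω => C ω = c)
      = (Pr p fun ω => A ω = a ∧ C ω = c) * (Pr p fun ω => B ω = b ∧ C ω = c) := by
    apply mul_right_cancel₀ hCne
    field_simp at h'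
    linear_combination (Pr p fun ω => C ω = c) * h'
  beta_reduce
  linear_combination key

lemma condIndep_dropB {α β γ : Type*} {p : Ω → ℝ} (hp : ∀ ω, 0 ≤ p ω)
    {A : Ω → α} {B : Ω → β} {C : Ω → γ}
    (h : CondIndep p A B C) (a : α) (b : β) (c : γ)
    (hpos : 0 < Pr p (fun ω => B ω = b ∧ C ω = c)) :
    CPr p (fun ω => A ω = a) (fun ω => B ω = b ∧ C ω = c) =
      CPr p (fun ω => A ω = a) (fun ω => C ω = c) := by
  have hC : 0 < Pr p (fun ω => C ω = c) :=
    lt_of_lt_of_le hpos (Pr_mono hp fun ω h => h.2)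
  have h' := h a b c hC
  unfold CPr at h' ⊢
  have hAB : Pr p (fun ω => A ω = a ∧ B ω = b ∧ C ω = c)
      = Pr p (fun ω => (A ω = a ∧ B ω = b) ∧ C ω = c) := Pr_congr p (by tauto)
  rw [hAB]
  have hCne : Pr p (fun ω => C ω = c) ≠ 0 := hC.ne'
  have hBne : Pr p (fun ω => B ω = b ∧ C ω = c) ≠ 0 := hpos.ne'
  rw [div_eq_div_iff hBne hCne]
  have key : (Pr p fun ω => (A ω = a ∧ B ω = b) ∧ C ω = c) * (Pr p fun ω => C ω = c)
      = (Pr p fun ω => A ω = a ∧ C ω = c) * (Pr p fun ω => B ω = b ∧ C ω = c) := by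
    apply mul_right_cancel₀ hCne
    field_simp at h'
    linear_combination (Pr p fun ω => C ω = c) * h'
  beta_reduce
  linear_combination key


lemma aux_sum {𝒴 : Type*} [Fintype 𝒴] {p : Ω → ℝ} (Y : Ω → 𝒴) {C : Ω → Prop}
    (hC : 0 < Pr p C) : ∑ y, CPr p (fun ω => Y ω = y) C = 1 := by
  unfold CPr
  rw [← Finset.sum_div, Pr_sum_fiber, div_self hC.ne']

lemma aux_drop {𝒳 𝒯 𝒴 : Type*} {p : Ω → ℝ} (hp : ∀ ω, 0 ≤ p ω)
    {X : Ω → 𝒳} {T : Ω → 𝒯} {Y : Ω → 𝒴} {RX RT : Ω → Bool}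
    (hRX : CondIndep p RX Y (fun ω => (X ω, T ω)))
    (hRT : CondIndep p RT Y (fun ω => (X ω, T ω, RX ω)))
    (x : 𝒳) (t : 𝒯)
    (hpos : 0 < Pr p (fun ω => X ω = x ∧ T ω = t ∧ RX ω = true ∧ RT ω = true)) (y : 𝒴) :
    CPr p (fun ω => Y ω = y) (fun ω => T ω = t ∧ X ω = x) =
      CPr p (fun ω => Y ω = y) (fun ω => T ω = t ∧ X ω = x ∧ RX ω = true ∧ RT ω = true) := by
  have pos1 : 0 < Pr p (fun ω => RX ω = true ∧ (X ω, T ω) = (x, t)) :=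
    lt_of_lt_of_le hpos (Pr_mono hp (by rintro ω ⟨h1, h2, h3, h4⟩; exact ⟨h3, by simp [h1, h2]⟩))
  have pos2 : 0 < Pr p (fun ω => RT ω = true ∧ (X ω, T ω, RX ω) = (x, t, true)) :=
    lt_of_lt_of_le hpos
      (Pr_mono hp (by rintro ω ⟨h1, h2, h3, h4⟩; exact ⟨h4, by simp [h1, h2, h3]⟩))
  have h1 := condIndep_dropA hp hRX true y (x, t) pos1
  have h2 := condIndep_dropA hp hRT true y (x, t, true) pos2
  calc CPr p (fun ω => Y ω = y) (fun ω => T ω = t ∧ X ω = x)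
      = CPr p (fun ω => Y ω = y) (fun ω => (X ω, T ω) = (x, t)) :=
        CPr_congr p (fun _ => Iff.rfl) (fun ω => by simp only [Prod.mk.injEq]; try tauto)
    _ = CPr p (fun ω => Y ω = y) (fun ω => RX ω = true ∧ (X ω, T ω) = (x, t)) := h1.symm
    _ = CPr p (fun ω => Y ω = y) (fun ω => (X ω, T ω, RX ω) = (x, t, true)) :=
        CPr_congr p (fun _ => Iff.rfl) (fun ω => by simp only [Prod.mk.injEq]; try tauto)
    _ = CPr p (fun ω => Y ω = y) (fun ω => RT ω = true ∧ (X ω, T ω, RX ω) = (x, t, true)) :=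
        h2.symm
    _ = CPr p (fun ω => Y ω = y) (fun ω => T ω = t ∧ X ω = x ∧ RX ω = true ∧ RT ω = true) :=
        CPr_congr p (fun _ => Iff.rfl) (fun ω => by simp only [Prod.mk.injEq]; try tauto)

lemma aux_fact {𝒳 𝒯 𝒴 : Type*} {p : Ω → ℝ} (hp : ∀ ω, 0 ≤ p ω)
    {X : Ω → 𝒳} {T : Ω → 𝒯} {Y : Ω → 𝒴} {RX RT RY : Ω → Bool}
    (hRY : CondIndep p RY T (fun ω => (X ω, Y ω, RX ω, RT ω)))
    (x : 𝒳) (t : 𝒯)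
    (hpos : 0 < Pr p (fun ω => X ω = x ∧ T ω = t ∧ RX ω = true ∧ RT ω = true)) (y : 𝒴) :
    CPr p (fun ω => Y ω = y ∧ RY ω = true)
        (fun ω => T ω = t ∧ X ω = x ∧ RX ω = true ∧ RT ω = true) =
      CPr p (fun ω => Y ω = y) (fun ω => T ω = t ∧ X ω = x ∧ RX ω = true ∧ RT ω = true) *
      CPr p (fun ω => RY ω = true) (fun ω => X ω = x ∧ Y ω = y ∧ RX ω = true ∧ RT ω = true) := by
  have hPC : 0 < Pr p (fun ω => T ω = t ∧ X ω = x ∧ RX ω = true ∧ RT ω = true) :=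
    lt_of_lt_of_le hpos (Pr_mono hp (fun ω h => ⟨h.2.1, h.1, h.2.2⟩))
  by_cases h0 : Pr p (fun ω => Y ω = y ∧ T ω = t ∧ X ω = x ∧ RX ω = true ∧ RT ω = true) = 0
  · have hnum : Pr p (fun ω => (Y ω = y ∧ RY ω = true) ∧
        T ω = t ∧ X ω = x ∧ RX ω = true ∧ RT ω = true) = 0 := by
      have hle := Pr_mono hp (E := fun ω => (Y ω = y ∧ RY ω = true) ∧
        T ω = t ∧ X ω = x ∧ RX ω = true ∧ RT ω = true)
        (F := fun ω => Y ω = y ∧ T ω = t ∧ X ω = x ∧ RX ω = true ∧ RT ω = true)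
        (fun ω h => ⟨h.1.1, h.2⟩)
      have hge := Pr_nonneg hp (fun ω => (Y ω = y ∧ RY ω = true) ∧
        T ω = t ∧ X ω = x ∧ RX ω = true ∧ RT ω = true)
      linarith
    unfold CPr
    rw [hnum, h0]
    simp
  · have hpos2 : 0 < Pr p (fun ω => Y ω = y ∧ T ω = t ∧ X ω = x ∧ RX ω = true ∧ RT ω = true) :=
      lt_of_le_of_ne (Pr_nonneg hp _) (Ne.symm h0)
    have pos3 : 0 < Pr p (fun ω => T ω = t ∧ (X ω, Y ω, RX ω, RT ω) = (x, y, true, true)) :=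
      lt_of_lt_of_le hpos2 (le_of_eq (Pr_congr p (fun ω => by simp only [Prod.mk.injEq]; try tauto)))
    have step : CPr p (fun ω => RY ω = true)
          (fun ω => Y ω = y ∧ T ω = t ∧ X ω = x ∧ RX ω = true ∧ RT ω = true)
        = CPr p (fun ω => RY ω = true)
          (fun ω => X ω = x ∧ Y ω = y ∧ RX ω = true ∧ RT ω = true) :=
      calc CPr p (fun ω => RY ω = true)
            (fun ω => Y ω = y ∧ T ω = t ∧ X ω = x ∧ RX ω = true ∧ RT ω = true)
          = CPr p (fun ω => RY ω = true)
            (fun ω => T ω = t ∧ (X ω, Y ω, RX ω, RT ω) = (x, y, true, true)) :=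
            CPr_congr p (fun _ => Iff.rfl) (fun ω => by simp only [Prod.mk.injEq]; try tauto)
        _ = CPr p (fun ω => RY ω = true)
            (fun ω => (X ω, Y ω, RX ω, RT ω) = (x, y, true, true)) :=
            condIndep_dropB hp hRY true t (x, y, true, true) pos3
        _ = CPr p (fun ω => RY ω = true)
            (fun ω => X ω = x ∧ Y ω = y ∧ RX ω = true ∧ RT ω = true) :=
            CPr_congr p (fun _ => Iff.rfl) (fun ω => by simp only [Prod.mk.injEq]; try tauto)
    rw [← step]
    unfold CPr
    rw [Pr_congr p (show ∀ ω, ((Y ω = y ∧ RY ω = true) ∧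
        T ω = t ∧ X ω = x ∧ RX ω = true ∧ RT ω = true) ↔
        (RY ω = true ∧ Y ω = y ∧ T ω = t ∧ X ω = x ∧ RX ω = true ∧ RT ω = true)
        from fun ω => by tauto)]
    rw [Pr_congr p (show ∀ ω, ((fun ω => Y ω = y) ω ∧
        T ω = t ∧ X ω = x ∧ RX ω = true ∧ RT ω = true) ↔
        (Y ω = y ∧ T ω = t ∧ X ω = x ∧ RX ω = true ∧ RT ω = true) from fun ω => Iff.rfl)]
    field_simp


/-- Theorem 2, part (i), discrete form: under Assumption 2, positivity, equal observed-data
conditionals at `x`, and the full-rank (completeness) condition on the matrix `Θ_x`, the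
conditional outcome distribution at `x` is identified. -/
theorem stmt_5 {𝒳 𝒯 𝒴 : Type*} [Fintype 𝒳] [Fintype 𝒯] [Fintype 𝒴]
    [DecidableEq 𝒯] [DecidableEq 𝒴]
    (p q : Ω → ℝ)
    (hp0 : ∀ ω, 0 ≤ p ω) (hp1 : ∑ ω, p ω = 1)
    (hq0 : ∀ ω, 0 ≤ q ω) (hq1 : ∑ ω, q ω = 1)
    (X : Ω → 𝒳) (T : Ω → 𝒯) (Y : Ω → 𝒴) (RX RT RY : Ω → Bool)
    (x : 𝒳)
    (hpRX : CondIndep p RX Y (fun ω => (X ω, T ω)))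
    (hpRT : CondIndep p RT Y (fun ω => (X ω, T ω, RX ω)))
    (hpRY : CondIndep p RY T (fun ω => (X ω, Y ω, RX ω, RT ω)))
    (hqRX : CondIndep q RX Y (fun ω => (X ω, T ω)))
    (hqRT : CondIndep q RT Y (fun ω => (X ω, T ω, RX ω)))
    (hqRY : CondIndep q RY T (fun ω => (X ω, Y ω, RX ω, RT ω)))
    (hppos : ∀ t : 𝒯,
      0 < Pr p (fun ω => X ω = x ∧ T ω = t ∧ RX ω = true ∧ RT ω = true))
    (hpres : ∀ y : 𝒴,
      0 < CPr p (fun ω => RY ω = true)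
        (fun ω => X ω = x ∧ Y ω = y ∧ RX ω = true ∧ RT ω = true))
    (hqpos : ∀ t : 𝒯,
      0 < Pr q (fun ω => X ω = x ∧ T ω = t ∧ RX ω = true ∧ RT ω = true))
    (hqres : ∀ y : 𝒴,
      0 < CPr q (fun ω => RY ω = true)
        (fun ω => X ω = x ∧ Y ω = y ∧ RX ω = true ∧ RT ω = true))
    (hobs1 : ∀ (t : 𝒯) (y : 𝒴),
      CPr p (fun ω => Y ω = y ∧ RY ω = true)
          (fun ω => T ω = t ∧ X ω = x ∧ RX ω = true ∧ RT ω = true) =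
        CPr q (fun ω => Y ω = y ∧ RY ω = true)
          (fun ω => T ω = t ∧ X ω = x ∧ RX ω = true ∧ RT ω = true))
    (hobs0 : ∀ t : 𝒯,
      CPr p (fun ω => RY ω = false)
          (fun ω => T ω = t ∧ X ω = x ∧ RX ω = true ∧ RT ω = true) =
        CPr q (fun ω => RY ω = false)
          (fun ω => T ω = t ∧ X ω = x ∧ RX ω = true ∧ RT ω = true))
    (hrank : (Matrix.of fun (t : 𝒯) (y : 𝒴) =>
        CPr p (fun ω => Y ω = y ∧ RY ω = true)
          (fun ω => T ω = t ∧ X ω = x ∧ RX ω = true ∧ RT ω = true)).rank =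
      Fintype.card 𝒴) :
    ∀ (t : 𝒯) (y : 𝒴),
      CPr p (fun ω => Y ω = y) (fun ω => T ω = t ∧ X ω = x) =
        CPr q (fun ω => Y ω = y) (fun ω => T ω = t ∧ X ω = x) := by
  have hPCp : ∀ t : 𝒯, 0 < Pr p (fun ω => T ω = t ∧ X ω = x ∧ RX ω = true ∧ RT ω = true) :=
    fun t => lt_of_lt_of_le (hppos t) (Pr_mono hp0 (fun ω h => ⟨h.2.1, h.1, h.2.2⟩))
  have hPCq : ∀ t : 𝒯, 0 < Pr q (fun ω => T ω = t ∧ X ω = x ∧ RX ω = true ∧ RT ω = true) :=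
    fun t => lt_of_lt_of_le (hqpos t) (Pr_mono hq0 (fun ω h => ⟨h.2.1, h.1, h.2.2⟩))
  set Θ : Matrix 𝒯 𝒴 ℝ := Matrix.of fun (t : 𝒯) (y : 𝒴) =>
      CPr p (fun ω => Y ω = y ∧ RY ω = true)
        (fun ω => T ω = t ∧ X ω = x ∧ RX ω = true ∧ RT ω = true) with hΘ
  set ap : 𝒯 → 𝒴 → ℝ := fun t y =>
      CPr p (fun ω => Y ω = y) (fun ω => T ω = t ∧ X ω = x ∧ RX ω = true ∧ RT ω = true) with hap
  set aq : 𝒯 → 𝒴 → ℝ := fun t y =>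
      CPr q (fun ω => Y ω = y) (fun ω => T ω = t ∧ X ω = x ∧ RX ω = true ∧ RT ω = true) with haq
  set rp : 𝒴 → ℝ := fun y =>
      CPr p (fun ω => RY ω = true)
        (fun ω => X ω = x ∧ Y ω = y ∧ RX ω = true ∧ RT ω = true) with hrp
  set rq : 𝒴 → ℝ := fun y =>
      CPr q (fun ω => RY ω = true)
        (fun ω => X ω = x ∧ Y ω = y ∧ RX ω = true ∧ RT ω = true) with hrq
  have factp : ∀ t y, Θ t y = ap t y * rp y := fun t y =>
    aux_fact hp0 hpRY x t (hppos t) y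
  have factq : ∀ t y, Θ t y = aq t y * rq y := fun t y => by
    have h1 := hobs1 t y
    have h2 := aux_fact hq0 hqRY x t (hqpos t) y
    calc Θ t y = _ := h1
      _ = aq t y * rq y := h2
  have sump : ∀ t, ∑ y, ap t y = 1 := fun t => aux_sum Y (hPCp t)
  have sumq : ∀ t, ∑ y, aq t y = 1 := fun t => aux_sum Y (hPCq t)
  have hker : ∀ v : 𝒴 → ℝ, Θ.mulVec v = 0 → v = 0 := by
    intro v hv
    have h1 : v ∈ LinearMap.ker Θ.mulVecLin := by
      simpa [Matrix.mulVecLin_apply] using hv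
    have h2 : LinearMap.ker Θ.mulVecLin = ⊥ := by
      have hrn := LinearMap.finrank_range_add_finrank_ker Θ.mulVecLin
      have hfun : Module.finrank ℝ (𝒴 → ℝ) = Fintype.card 𝒴 :=
        Module.finrank_fintype_fun_eq_card ℝ
      have hr : Module.finrank ℝ (LinearMap.range Θ.mulVecLin) = Fintype.card 𝒴 := by
        rw [← hrank]; rfl
      rw [hfun, hr] at hrn
      have h0 : Module.finrank ℝ (LinearMap.ker Θ.mulVecLin) = 0 := by omega
      exact Submodule.finrank_eq_zero.mp h0
    rw [h2] at h1
    simpa using h1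
  have hmv : Θ.mulVec (fun y => (rp y)⁻¹ - (rq y)⁻¹) = 0 := by
    funext t
    have key : ∀ y : 𝒴, Θ t y * ((rp y)⁻¹ - (rq y)⁻¹) = ap t y - aq t y := by
      intro y
      rw [mul_sub]
      have e1 : Θ t y * (rp y)⁻¹ = ap t y := by
        rw [factp t y, mul_inv_cancel_right₀ (hpres y).ne']
      have e2 : Θ t y * (rq y)⁻¹ = aq t y := by
        rw [factq t y, mul_inv_cancel_right₀ (hqres y).ne']
      rw [e1, e2]
    simp only [Matrix.mulVec, dotProduct, Pi.zero_apply]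
    rw [Finset.sum_congr rfl (fun y _ => key y), Finset.sum_sub_distrib, sump t, sumq t,
      sub_self]
  have hv0 := hker _ hmv
  have hrpq : ∀ y, rp y = rq y := by
    intro y
    have h := congrFun hv0 y
    simp only [Pi.zero_apply, sub_eq_zero] at h
    exact inv_inj.mp h
  have hapq : ∀ t y, ap t y = aq t y := by
    intro t y
    have h : ap t y * rp y = aq t y * rp y := by
      rw [← factp t y, hrpq y, ← factq t y]
    exact mul_right_cancel₀ (hpres y).ne' h
  intro t y
  rw [aux_drop hp0 hpRX hpRT x t (hppos t) y, aux_drop hq0 hqRX hqRT x t (hqpos t) y]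
  exact hapq t y


end CATEMNAR
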